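/- For a neutral alternating sign matrix N with one −1 and its vertical reflection N̅, one has c(N̅) = ℓ(N) and ℓ(N̅) = c(N). -/

import Mathlib

/-!
Prefix sums of a row of an alternating sign matrix lie in `{0, 1}`, so between any two `1`s of a
row there is a `-1`. In the closing row the `-1` is unique, hence that row has exactly one `1` on
each side of the `-1` and zeros elsewhere. As the closing row lies directly below the opening row,
the leading `1` of `N` is the `1` left of the `-1` in that row, i.e. the mirror image of the
closing `1` of `N̅`, and symmetrically. The regions defining `ℓ(N)` and `c(N̅)` are then mirror
images of each other, except for a stretch of the closing row that contains only zeros.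
-/

open Finset

/-- The nonzero entries alternate in sign, beginning and ending with `1`. -/
def AltList (l : List ℤ) : Prop :=
  l.length % 2 = 1 ∧ ∀ (m : ℕ) (h : m < l.length), l.get ⟨m, h⟩ = if m % 2 = 0 then 1 else -1

/-- Alternating sign matrix: entries in `{-1,0,1}` (forced), and in each row and column
the nonzero entries alternate in sign, beginning and ending with `1`. -/
def IsASM {n : ℕ} (A : Matrix (Fin n) (Fin n) ℤ) : Prop :=
  (∀ i, AltList ((List.ofFn (fun j => A i j)).filter (fun x => x ≠ 0))) ∧
  (∀ j, AltList ((List.ofFn (fun i => A i j)).filter (fun x => x ≠ 0)))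

/-- Vertical reflection: `(reflect A) i j = A i (n+1-j)` (0-indexed as `Fin.rev`). -/
def reflect {n : ℕ} (A : Matrix (Fin n) (Fin n) ℤ) : Matrix (Fin n) (Fin n) ℤ :=
  fun i j => A i j.rev

theorem List.sum_filter_ne_zero {M : Type*} [AddMonoid M] [DecidableEq M] (l : List M) :
    (l.filter (· ≠ 0)).sum = l.sum := by
  induction l with
  | nil => rfl
  | cons x l ih => by_cases hx : x = 0 <;> simp_all

theorem Fin.sum_val_lt_eq_add {M : Type*} [AddCommMonoid M] {n : ℕ} (f : Fin n → M)
    {k m : ℕ} (hkm : k ≤ m) :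
    ∑ j with j.val < m, f j = ∑ j with j.val < k, f j + ∑ j with k ≤ j.val ∧ j.val < m, f j := by
  rw [← sum_union (disjoint_filter.2 fun j _ h h' => by omega)]
  congr 1
  ext j
  simp only [mem_filter, mem_univ, true_and, mem_union]
  omega

theorem Fin.sum_val_lt_succ {M : Type*} [AddCommMonoid M] {n : ℕ} (f : Fin n → M) (a : Fin n) :
    ∑ j with j.val < a.val + 1, f j = ∑ j with j.val < a.val, f j + f a := by
  rw [Fin.sum_val_lt_eq_add f a.val.le_succ]
  congr
  rw [← sum_singleton f a]
  congr 1
  ext j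
  simp only [mem_filter, mem_univ, true_and, mem_singleton, Fin.ext_iff]
  omega

namespace AltList

variable {l : List ℤ}

theorem sum_take (hl : AltList l) : ∀ m ≤ l.length, (l.take m).sum = if m % 2 = 0 then 0 else 1
  | 0, _ => rfl
  | m + 1, hm => by
    have hget := hl.2 m (by omega)
    rw [List.get_eq_getElem] at hget
    rw [List.sum_take_succ _ _ (by omega), hl.sum_take m (by omega), hget]
    split_ifs <;> omega

theorem sum_take_eq_zero_or_one (hl : AltList (l.filter (· ≠ 0))) (m : ℕ) :
    (l.take m).sum = 0 ∨ (l.take m).sum = 1 := by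
  have hpre := (l.take_prefix m).filter (· ≠ 0)
  rw [← List.sum_filter_ne_zero, List.prefix_iff_eq_take.1 hpre, hl.sum_take _ hpre.length_le]
  split_ifs <;> simp

end AltList

def IsAltRow {n : ℕ} (f : Fin n → ℤ) : Prop :=
  AltList ((List.ofFn f).filter (· ≠ 0))

namespace IsAltRow

variable {n : ℕ} {f : Fin n → ℤ}

theorem sum_val_lt (hf : IsAltRow f) (k : ℕ) :
    ∑ j with j.val < k, f j = 0 ∨ ∑ j with j.val < k, f j = 1 := by
  rw [← List.sum_take_ofFn]
  exact AltList.sum_take_eq_zero_or_one hf k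

theorem apply_mem (hf : IsAltRow f) (a : Fin n) : f a = -1 ∨ f a = 0 ∨ f a = 1 := by
  have := Fin.sum_val_lt_succ f a
  rcases hf.sum_val_lt a with h | h <;> rcases hf.sum_val_lt (a.val + 1) with h' | h' <;> omega

theorem exists_neg_one_between (hf : IsAltRow f) {a b : Fin n} (hab : a < b) (ha : f a = 1)
    (hb : f b = 1) : ∃ j, a < j ∧ j < b ∧ f j = -1 := by
  have hsplit := Fin.sum_val_lt_eq_add f (show a.val + 1 ≤ b.val from hab)
  have hsa := Fin.sum_val_lt_succ f a
  have hsb := Fin.sum_val_lt_succ f b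
  -- the prefix sum is `1` just after `a` and `0` just before `b`
  have hlt : ∑ j with a.val + 1 ≤ j.val ∧ j.val < b.val, f j <
      ∑ j : Fin n with a.val + 1 ≤ j.val ∧ j.val < b.val, (0 : ℤ) := by
    rw [sum_const_zero]
    rcases hf.sum_val_lt a with h | h <;> rcases hf.sum_val_lt (a.val + 1) with h' | h' <;>
      rcases hf.sum_val_lt b with h'' | h'' <;>
      rcases hf.sum_val_lt (b.val + 1) with h''' | h''' <;> omega
  obtain ⟨j, hj, hfj⟩ := exists_lt_of_sum_lt hlt
  simp only [mem_filter, mem_univ, true_and] at hj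
  refine ⟨j, Fin.lt_def.2 (by omega), Fin.lt_def.2 hj.2, ?_⟩
  rcases hf.apply_mem j with h | h | h <;> omega

variable {c : Fin n}

theorem eq_of_lt (hf : IsAltRow f) (hc : ∀ j, f j = -1 → j = c) {a b : Fin n} (ha : f a = 1)
    (hb : f b = 1) (hac : a < c) (hbc : b < c) : a = b := by
  by_contra hne
  rcases lt_or_gt_of_ne hne with h | h
  · obtain ⟨j, -, hjb, hj⟩ := hf.exists_neg_one_between h ha hb
    exact (hc j hj ▸ hjb).not_gt hbc
  · obtain ⟨j, -, hja, hj⟩ := hf.exists_neg_one_between h hb ha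
    exact (hc j hj ▸ hja).not_gt hac

theorem eq_of_gt (hf : IsAltRow f) (hc : ∀ j, f j = -1 → j = c) {a b : Fin n} (ha : f a = 1)
    (hb : f b = 1) (hca : c < a) (hcb : c < b) : a = b := by
  by_contra hne
  rcases lt_or_gt_of_ne hne with h | h
  · obtain ⟨j, hbj, -, hj⟩ := hf.exists_neg_one_between h ha hb
    exact (hc j hj ▸ hbj).not_gt hca
  · obtain ⟨j, hbj, -, hj⟩ := hf.exists_neg_one_between h hb ha
    exact (hc j hj ▸ hbj).not_gt hcb

theorem eq_zero_of_lt (hf : IsAltRow f) (hc : ∀ j, f j = -1 → j = c) {a j : Fin n}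
    (ha : f a = 1) (haj : a < j) (hjc : j < c) : f j = 0 := by
  rcases hf.apply_mem j with h | h | h
  · exact absurd (hc j h) hjc.ne
  · exact h
  · obtain ⟨k, -, hkj, hk⟩ := hf.exists_neg_one_between haj ha h
    exact absurd (hc k hk) (hkj.trans hjc).ne

theorem eq_zero_of_gt (hf : IsAltRow f) (hc : ∀ j, f j = -1 → j = c) {b j : Fin n}
    (hb : f b = 1) (hcj : c < j) (hjb : j < b) : f j = 0 := by
  rcases hf.apply_mem j with h | h | h
  · exact absurd (hc j h) hcj.ne'
  · exact h
  · obtain ⟨k, hjk, -, hk⟩ := hf.exists_neg_one_between hjb h hb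
    exact absurd (hc k hk) (hcj.trans hjk).ne'

end IsAltRow

section BelowBetweenSum

variable {n : ℕ}

def belowBetweenSum (A : Matrix (Fin n) (Fin n) ℤ) (r a b : Fin n) : ℤ :=
  ∑ p ∈ (univ ×ˢ univ).filter (fun p : Fin n × Fin n => r < p.1 ∧ a < p.2 ∧ p.2 < b), A p.1 p.2

theorem belowBetweenSum_reflect (A : Matrix (Fin n) (Fin n) ℤ) (r a b : Fin n) :
    belowBetweenSum (reflect A) r a b = belowBetweenSum A r b.rev a.rev := by
  refine sum_equiv ((Equiv.refl _).prodCongr Fin.revPerm) (fun p => ?_) (fun p _ => rfl)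
  simp only [mem_filter, mem_product, mem_univ, true_and, Equiv.prodCongr_apply, Prod.map,
    Equiv.refl_apply, Fin.revPerm_apply, Fin.rev_lt_rev]
  tauto

theorem belowBetweenSum_eq_of_row_eq_zero (A : Matrix (Fin n) (Fin n) ℤ) {r r' a b : Fin n}
    (hr : r.val + 1 = r'.val) (hz : ∀ j, a < j → j < b → A r' j = 0) :
    belowBetweenSum A r a b = belowBetweenSum A r' a b := by
  refine (sum_subset (fun p hp => ?_) (fun p hp hp' => ?_)).symm
  · simp only [mem_filter, mem_product, mem_univ, true_and, Fin.lt_def] at hp ⊢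
    omega
  · simp only [mem_filter, mem_product, mem_univ, true_and] at hp hp'
    have hp1 : p.1 = r' := le_antisymm (not_lt.1 fun h => hp' ⟨h, hp.2⟩)
      (Fin.le_def.2 (by have := Fin.lt_def.1 hp.1; omega))
    rw [hp1]
    exact hz p.2 hp.2.1 hp.2.2

end BelowBetweenSum

/-- `(rm, cm)` is the `-1`, `rp` the opening row, `(il, cl)` the leading `1` and `cc` the closing
column of `N`; primed names are the same data for `N̅ = reflect N`, and `lN, cN, lN', cN'` stand
for `ℓ(N), c(N), ℓ(N̅), c(N̅)`. -/
theorem stmt_18_general {n : ℕ} (N : Matrix (Fin n) (Fin n) ℤ) (hA : IsASM N)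
    (rm cm rp il cl cc il' cl' cc' : Fin n) (lN cN lN' cN' : ℤ)
    (huniq : ∀ i j, N i j = -1 → i = rm ∧ j = cm)
    (hrp : (rp : ℕ) + 1 = (rm : ℕ))
    -- leading cell of N
    (hil : rp < il) (hcl : cl < cm) (hl1 : N il cl = 1)
    (hlead : ∀ i j, rp < i → j < cm → N i j = 1 → il ≤ i)
    (hlN : lN = ∑ p ∈ (univ ×ˢ univ).filter
      (fun p : Fin n × Fin n => rp < p.1 ∧ cl < p.2 ∧ p.2 < cm), N p.1 p.2)
    -- closing cell of N
    (hcc : cm < cc) (hc1 : N rm cc = 1)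
    (hcN : cN = ∑ p ∈ (univ ×ˢ univ).filter
      (fun p : Fin n × Fin n => rm < p.1 ∧ cm < p.2 ∧ p.2 < cc), N p.1 p.2)
    -- leading cell of the reflection of N
    (hil' : rp < il') (hcl' : cl' < cm.rev) (hl1' : reflect N il' cl' = 1)
    (hlead' : ∀ i j, rp < i → j < cm.rev → reflect N i j = 1 → il' ≤ i)
    (hlN' : lN' = ∑ p ∈ (univ ×ˢ univ).filter
      (fun p : Fin n × Fin n => rp < p.1 ∧ cl' < p.2 ∧ p.2 < cm.rev), reflect N p.1 p.2)
    -- closing cell of the reflection of N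
    (hcc' : cm.rev < cc') (hc1' : reflect N rm cc' = 1)
    (hcN' : cN' = ∑ p ∈ (univ ×ˢ univ).filter
      (fun p : Fin n × Fin n => rm < p.1 ∧ cm.rev < p.2 ∧ p.2 < cc'), reflect N p.1 p.2) :
    cN' = lN ∧ lN' = cN := by
  have hrow : IsAltRow (N rm) := hA.1 rm
  have hneg : ∀ j, N rm j = -1 → j = cm := fun j h => (huniq rm j h).2
  have hrm : ∀ i, rp < i → rm ≤ i := fun i h => Fin.le_def.2 (by have := Fin.lt_def.1 h; omega)
  have hrp_rm : rp < rm := Fin.lt_def.2 (by omega)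
  have hcl_eq : cl = cc'.rev := by
    have hlt : cc'.rev < cm := Fin.rev_lt_iff.1 hcc'
    have hil_eq : il = rm := le_antisymm (hlead rm cc'.rev hrp_rm hlt hc1') (hrm il hil)
    exact hrow.eq_of_lt hneg (hil_eq ▸ hl1) hc1' hcl hlt
  have hcl'_eq : cl'.rev = cc := by
    have hlt : cc.rev < cm.rev := Fin.rev_lt_rev.2 hcc
    have hc1rev : reflect N rm cc.rev = 1 := by simpa [reflect] using hc1
    have hil_eq : il' = rm := le_antisymm (hlead' rm cc.rev hrp_rm hlt hc1rev) (hrm il' hil')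
    exact hrow.eq_of_gt hneg (hil_eq ▸ hl1') hc1 (Fin.lt_rev_iff.1 hcl') hcc
  subst hlN hcN hlN' hcN'
  change belowBetweenSum (reflect N) rm cm.rev cc' = belowBetweenSum N rp cl cm ∧
    belowBetweenSum (reflect N) rp cl' cm.rev = belowBetweenSum N rm cm cc
  rw [belowBetweenSum_reflect, belowBetweenSum_reflect, Fin.rev_rev, ← hcl_eq, hcl'_eq]
  exact ⟨(belowBetweenSum_eq_of_row_eq_zero N hrp fun j hj hj' =>
      hrow.eq_zero_of_lt hneg (hcl_eq ▸ hc1') hj hj').symm,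
    belowBetweenSum_eq_of_row_eq_zero N hrp fun j hj hj' =>
      hrow.eq_zero_of_gt hneg hc1 hj hj'⟩

/-- For a neutral ASM `N` with one `-1` at `(rm, cm)` (closing row `rm`, opening column
`cm`, opening row `rp = rm - 1`, neutrality `N rp cm = 1`), with leading `1` at `(il, cl)`
and closing column `cc` for `N` (giving `ℓ(N) = lN`, `c(N) = cN`), and with the analogous
data for the vertical reflection `N̅` (whose `-1` is at `(rm, cm.rev)`): leading `1` at
`(il', cl')` and closing column `cc'`, giving `ℓ(N̅) = lN'`, `c(N̅) = cN'`; then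
`c(N̅) = ℓ(N)` and `ℓ(N̅) = c(N)`. -/
theorem stmt_18 {n : ℕ} (N : Matrix (Fin n) (Fin n) ℤ) (hA : IsASM N)
    (rm cm rp il cl cc il' cl' cc' : Fin n) (lN cN lN' cN' : ℤ)
    (h1 : N rm cm = -1) (huniq : ∀ i j, N i j = -1 → i = rm ∧ j = cm)
    (hrp : (rp : ℕ) + 1 = (rm : ℕ)) (hneu : N rp cm = 1)
    -- leading cell of N
    (hil : rp < il) (hcl : cl < cm) (hl1 : N il cl = 1)
    (hlead : ∀ i j, rp < i → j < cm → N i j = 1 → il ≤ i)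
    (hlN : lN = ∑ p ∈ (univ ×ˢ univ).filter
      (fun p : Fin n × Fin n => rp < p.1 ∧ cl < p.2 ∧ p.2 < cm), N p.1 p.2)
    -- closing cell of N
    (hcc : cm < cc) (hc1 : N rm cc = 1)
    (hcN : cN = ∑ p ∈ (univ ×ˢ univ).filter
      (fun p : Fin n × Fin n => rm < p.1 ∧ cm < p.2 ∧ p.2 < cc), N p.1 p.2)
    -- leading cell of the reflection of N
    (hil' : rp < il') (hcl' : cl' < cm.rev) (hl1' : reflect N il' cl' = 1)
    (hlead' : ∀ i j, rp < i → j < cm.rev → reflect N i j = 1 → il' ≤ i)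
    (hlN' : lN' = ∑ p ∈ (univ ×ˢ univ).filter
      (fun p : Fin n × Fin n => rp < p.1 ∧ cl' < p.2 ∧ p.2 < cm.rev), reflect N p.1 p.2)
    -- closing cell of the reflection of N
    (hcc' : cm.rev < cc') (hc1' : reflect N rm cc' = 1)
    (hcN' : cN' = ∑ p ∈ (univ ×ˢ univ).filter
      (fun p : Fin n × Fin n => rm < p.1 ∧ cm.rev < p.2 ∧ p.2 < cc'), reflect N p.1 p.2) :
    cN' = lN ∧ lN' = cN :=
  stmt_18_general N hA rm cm rp il cl cc il' cl' cc' lN cN lN' cN' huniq hrp hil hcl hl1 hlead hlN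
    hcc hc1 hcN hil' hcl' hl1' hlead' hlN' hcc' hc1' hcN'
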